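/- arXiv:2604.11994 — 7 statements merged into one kernel-verified Lean document; each statement's English description precedes it below -/
import Mathlib

section
/- Let μ₁, μ₂ be real numbers with 1/4 ≤ μ₁ ≤ 3/4 and 1/4 ≤ μ₂ ≤ 3/4. Then the Kullback–Leibler divergence between the Bernoulli distributions with means μ₁ and μ₂ satisfies μ₁·log(μ₁/μ₂) + (1-μ₁)·log((1-μ₁)/(1-μ₂)) ≤ (8/3)·(μ₁ - μ₂)². -/
open Real Set

lemma gHasDeriv (p : ℝ) (hp0 : 0 < p) (hp1 : p < 1) {q : ℝ} (hq0 : 0 < q) (hq1 : q < 1) :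
    HasDerivAt (fun q => 8/3*(p-q)^2 - (p * Real.log (p/q) + (1-p) * Real.log ((1-p)/(1-q))))
      ((p - q) * (1/(q*(1-q)) - 16/3)) q := by
  have hq1' : (1:ℝ) - q ≠ 0 := by linarith
  have hA : HasDerivAt (fun q : ℝ => p * q⁻¹) (p * (-(q^2)⁻¹)) q :=
    (hasDerivAt_inv hq0.ne').const_mul p
  have hA' : HasDerivAt (fun q : ℝ => Real.log (p * q⁻¹))
      ((p * (-(q^2)⁻¹)) / (p * q⁻¹)) q := by
    refine hA.log ?_
    positivity
  have hB : HasDerivAt (fun q : ℝ => (1 - q)) (-1) q := by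
    simpa using (hasDerivAt_id q).const_sub 1
  have hB1 : HasDerivAt (fun q : ℝ => (1-p) * (1-q)⁻¹) ((1-p) * (-(-1) / (1-q)^2)) q :=
    (hB.inv hq1').const_mul (1-p)
  have hB' : HasDerivAt (fun q : ℝ => Real.log ((1-p) * (1-q)⁻¹))
      (((1-p) * (-(-1) / (1-q)^2)) / ((1-p) * (1-q)⁻¹)) q := by
    refine hB1.log ?_
    have : 0 < 1 - p := by linarith
    have : 0 < (1:ℝ) - q := by linarith
    positivity
  have hC : HasDerivAt (fun q : ℝ => 8/3*(p-q)^2) (8/3 * (2 * (p-q)^1 * -1)) q := by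
    exact (((hasDerivAt_id q).const_sub p).pow 2).const_mul (8/3)
  have h : HasDerivAt (fun q : ℝ => 8/3*(p-q)^2 - (p * Real.log (p * q⁻¹) + (1-p) * Real.log ((1-p) * (1-q)⁻¹))) _ q :=
    hC.sub ((hA'.const_mul p).add (hB'.const_mul (1-p)))
  have heq : (fun q : ℝ => 8/3*(p-q)^2 - (p * Real.log (p * q⁻¹) + (1-p) * Real.log ((1-p) * (1-q)⁻¹)))
      = (fun q => 8/3*(p-q)^2 - (p * Real.log (p/q) + (1-p) * Real.log ((1-p)/(1-q)))) := by
    funext x; rw [div_eq_mul_inv p, div_eq_mul_inv (1-p)]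
  rw [heq] at h
  convert h using 1
  have h1p : (1:ℝ) - p ≠ 0 := by linarith
  field_simp
  ring

lemma key (p : ℝ) (hp1 : 1/4 ≤ p) (hp2 : p ≤ 3/4) (q : ℝ) (hq1 : 1/4 ≤ q) (hq2 : q ≤ 3/4) :
    0 ≤ 8/3*(p-q)^2 - (p * Real.log (p/q) + (1-p) * Real.log ((1-p)/(1-q))) := by
  set g : ℝ → ℝ := fun q => 8/3*(p-q)^2 - (p * Real.log (p/q) + (1-p) * Real.log ((1-p)/(1-q))) with hg
  have hp0 : 0 < p := by linarith
  have hp1' : p < 1 := by linarith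
  have hgp : g p = 0 := by
    have : p / p = 1 := div_self hp0.ne'
    have h2 : (1-p)/(1-p) = 1 := div_self (by linarith)
    simp [hg, this, h2]
  have hderiv : ∀ x ∈ Icc (1/4 : ℝ) (3/4), HasDerivAt g ((p - x) * (1/(x*(1-x)) - 16/3)) x := by
    intro x hx
    exact gHasDeriv p hp0 hp1' (by linarith [hx.1]) (by linarith [hx.2])
  have hcont : ContinuousOn g (Icc (1/4 : ℝ) (3/4)) :=
    fun x hx => ((hderiv x hx).differentiableAt.continuousAt).continuousWithinAt
  have hfac : ∀ x ∈ Icc (1/4 : ℝ) (3/4), 1/(x*(1-x)) - 16/3 ≤ 0 := by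
    intro x hx
    have hx1 := hx.1; have hx2 := hx.2
    have h316 : (3:ℝ)/16 ≤ x*(1-x) := by nlinarith
    have : 1/(x*(1-x)) ≤ 16/3 := by
      rw [div_le_iff₀ (by nlinarith)]
      nlinarith
    linarith
  rcases le_total q p with hqp | hqp
  · -- g antitone on [q, p]
    have hsub : Icc q p ⊆ Icc (1/4 : ℝ) (3/4) := Icc_subset_Icc hq1 hp2
    have hanti : AntitoneOn g (Icc q p) := by
      apply antitoneOn_of_deriv_nonpos (convex_Icc q p) (hcont.mono hsub)
      · intro x hx
        have hx' : x ∈ Icc (1/4:ℝ) (3/4) := hsub (interior_subset hx)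
        exact (hderiv x hx').differentiableAt.differentiableWithinAt
      · intro x hx
        rw [interior_Icc] at hx
        have hx' : x ∈ Icc (1/4:ℝ) (3/4) := hsub (Ioo_subset_Icc_self hx)
        rw [(hderiv x hx').deriv]
        have h1 : 0 ≤ p - x := by linarith [hx.2]
        have h2 := hfac x hx'
        exact mul_nonpos_of_nonneg_of_nonpos h1 h2
    have := hanti (left_mem_Icc.mpr hqp) (right_mem_Icc.mpr hqp) hqp
    rw [hgp] at this
    exact this
  · -- g monotone on [p, q]
    have hsub : Icc p q ⊆ Icc (1/4 : ℝ) (3/4) := Icc_subset_Icc hp1 hq2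
    have hmono : MonotoneOn g (Icc p q) := by
      apply monotoneOn_of_deriv_nonneg (convex_Icc p q) (hcont.mono hsub)
      · intro x hx
        have hx' : x ∈ Icc (1/4:ℝ) (3/4) := hsub (interior_subset hx)
        exact (hderiv x hx').differentiableAt.differentiableWithinAt
      · intro x hx
        rw [interior_Icc] at hx
        have hx' : x ∈ Icc (1/4:ℝ) (3/4) := hsub (Ioo_subset_Icc_self hx)
        rw [(hderiv x hx').deriv]
        have h1 : p - x ≤ 0 := by linarith [hx.1]
        have h2 := hfac x hx'
        nlinarith
    have := hmono (left_mem_Icc.mpr hqp) (right_mem_Icc.mpr hqp) hqp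
    rw [hgp] at this
    exact this

/-- KL divergence between Bernoulli(μ₁) and Bernoulli(μ₂) with means in [1/4, 3/4]
is at most (8/3)(μ₁-μ₂)². -/
theorem stmt1 (μ₁ μ₂ : ℝ) (h1 : 1 / 4 ≤ μ₁) (h2 : μ₁ ≤ 3 / 4)
    (h3 : 1 / 4 ≤ μ₂) (h4 : μ₂ ≤ 3 / 4) :
    μ₁ * Real.log (μ₁ / μ₂) + (1 - μ₁) * Real.log ((1 - μ₁) / (1 - μ₂)) ≤
      8 / 3 * (μ₁ - μ₂) ^ 2 := by
  have := key μ₁ h1 h2 μ₂ h3 h4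
  linarith
end

section
/- Let M be a d × d real symmetric positive definite matrix and let x₁, …, x_H ∈ ℝ^d. Then 1 + Σ_{h=1}^H xₕᵀ M⁻¹ xₕ ≤ det(M + Σ_{h=1}^H xₕ xₕᵀ) / det(M). -/
open Matrix

private lemma one_add_sum_le_prod {ι : Type*} (s : Finset ι) (f : ι → ℝ)
    (hf : ∀ i ∈ s, 0 ≤ f i) : 1 + ∑ i ∈ s, f i ≤ ∏ i ∈ s, (1 + f i) := by
  classical
  induction s using Finset.cons_induction with
  | empty => simp
  | cons a s ha ih =>
    rw [Finset.sum_cons, Finset.prod_cons]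
    have hfa : 0 ≤ f a := hf a (Finset.mem_cons_self a s)
    have hsum : 0 ≤ ∑ i ∈ s, f i :=
      Finset.sum_nonneg fun i hi => hf i (Finset.mem_cons_of_mem hi)
    have ih' := ih fun i hi => hf i (Finset.mem_cons_of_mem hi)
    calc 1 + (f a + ∑ i ∈ s, f i) ≤ (1 + f a) * (1 + ∑ i ∈ s, f i) := by nlinarith
    _ ≤ (1 + f a) * ∏ i ∈ s, (1 + f i) := by
        apply mul_le_mul_of_nonneg_left ih' (by linarith)

private lemma vecMulVec_posSemidef {d : ℕ} (v : Fin d → ℝ) :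
    (Matrix.vecMulVec v v).PosSemidef := by
  refine Matrix.PosSemidef.of_dotProduct_mulVec_nonneg ?_ ?_
  · ext i j
    simp [vecMulVec_apply, mul_comm]
  · intro y
    have : star y ⬝ᵥ (Matrix.vecMulVec v v *ᵥ y) = (v ⬝ᵥ y) * (v ⬝ᵥ y) := by
      simp only [dotProduct, mulVec, vecMulVec_apply, star_trivial, Finset.sum_mul,
        Finset.mul_sum]
      rw [Finset.sum_comm]
      apply Finset.sum_congr rfl; intro i _
      apply Finset.sum_congr rfl; intro j _
      ring
    rw [this]
    exact mul_self_nonneg _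

/-- det (1 + A) ≥ 1 + trace A for PSD A. -/
private lemma det_one_add_ge {d : ℕ} (A : Matrix (Fin d) (Fin d) ℝ)
    (hA : A.PosSemidef) : 1 + A.trace ≤ (1 + A).det := by
  have hH := hA.1
  set U : Matrix (Fin d) (Fin d) ℝ := (hH.eigenvectorUnitary : Matrix (Fin d) (Fin d) ℝ)
  have hU1 : U * star U = 1 := (Matrix.mem_unitaryGroup_iff).mp hH.eigenvectorUnitary.2
  have hU2 : star U * U = 1 := (Matrix.mem_unitaryGroup_iff').mp hH.eigenvectorUnitary.2
  have hspec : A = U * diagonal (RCLike.ofReal ∘ hH.eigenvalues) * star U :=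
    hH.spectral_theorem
  have hdiag : (RCLike.ofReal ∘ hH.eigenvalues : Fin d → ℝ) = hH.eigenvalues := by
    ext i; simp
  rw [hdiag] at hspec
  -- trace
  have htrace : A.trace = ∑ i, hH.eigenvalues i := by
    conv_lhs => rw [hspec]
    rw [Matrix.trace_mul_cycle, hU2, one_mul, trace_diagonal]
  -- det
  have hdet : (1 + A).det = ∏ i, (1 + hH.eigenvalues i) := by
    have hUU : U.det * (star U).det = 1 := by
      rw [← Matrix.det_mul, hU1, Matrix.det_one]
    have key : U * (diagonal fun i => 1 + hH.eigenvalues i) * star U = 1 + A := by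
      have hdadd : (diagonal fun i => 1 + hH.eigenvalues i)
          = 1 + diagonal hH.eigenvalues := by
        rw [← Matrix.diagonal_one, ← Matrix.diagonal_add]
      rw [hdadd, mul_add, add_mul, mul_one, hU1, ← hspec]
    calc (1 + A).det
        = U.det * (diagonal fun i => 1 + hH.eigenvalues i).det * (star U).det := by
          rw [← key, Matrix.det_mul, Matrix.det_mul]
      _ = (diagonal fun i => 1 + hH.eigenvalues i).det * (U.det * (star U).det) := by ring
      _ = ∏ i, (1 + hH.eigenvalues i) := by rw [hUU, mul_one, det_diagonal]
  rw [htrace, hdet]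
  exact one_add_sum_le_prod _ _ fun i _ => hA.eigenvalues_nonneg i

open scoped MatrixOrder in
private lemma exists_sqrt_aux {d : ℕ} (M : Matrix (Fin d) (Fin d) ℝ) (hM : M.PosSemidef) :
    ∃ N : Matrix (Fin d) (Fin d) ℝ, N.PosSemidef ∧ N * N = M :=
  ⟨CFC.sqrt M, (CFC.sqrt_nonneg M).posSemidef, CFC.sqrt_mul_sqrt_self M hM.nonneg⟩

/-- For a real symmetric positive definite matrix `M` and vectors `x₁,…,x_H`,
`1 + Σ xₕᵀ M⁻¹ xₕ ≤ det(M + Σ xₕ xₕᵀ) / det M`. -/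
theorem stmt6 {d H : ℕ} (M : Matrix (Fin d) (Fin d) ℝ) (hM : M.PosDef)
    (x : Fin H → Fin d → ℝ) :
    1 + ∑ h, (x h) ⬝ᵥ (M⁻¹ *ᵥ x h) ≤
      (M + ∑ h, Matrix.vecMulVec (x h) (x h)).det / M.det := by
  classical
  set S : Matrix (Fin d) (Fin d) ℝ := ∑ h, Matrix.vecMulVec (x h) (x h) with hSdef
  have hS : S.PosSemidef := by
    rw [hSdef]
    apply Finset.sum_induction
    · exact fun a b ha hb => ha.add hb
    · exact Matrix.PosSemidef.zero
    · exact fun h _ => vecMulVec_posSemidef (x h)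
  obtain ⟨N, hNps, hNN⟩ := exists_sqrt_aux M hM.posSemidef
  have hMdet : 0 < M.det := hM.det_pos
  have hNdet : N.det ≠ 0 := by
    intro h
    rw [← hNN, Matrix.det_mul, h, mul_zero] at hMdet
    exact lt_irrefl _ hMdet
  have hNinv : IsUnit N.det := isUnit_iff_ne_zero.mpr hNdet
  have hNH : Nᴴ = N := hNps.1
  have hNinvH : (N⁻¹)ᴴ = N⁻¹ := hNps.1.inv
  set A : Matrix (Fin d) (Fin d) ℝ := N⁻¹ * S * N⁻¹ with hAdef
  have hA : A.PosSemidef := by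
    have := hS.conjTranspose_mul_mul_same (N⁻¹)
    rwa [hNinvH] at this
  -- M + S = N * (1 + A) * N
  have hfact : M + S = N * (1 + A) * N := by
    rw [hAdef, mul_add, add_mul, mul_one]
    rw [hNN]
    congr 1
    rw [← mul_assoc, ← mul_assoc, Matrix.mul_nonsing_inv _ hNinv, one_mul, mul_assoc,
      Matrix.nonsing_inv_mul _ hNinv, mul_one]
  have hNdet2 : N.det * N.det = M.det := by rw [← Matrix.det_mul, hNN]
  have hdet : (M + S).det = M.det * (1 + A).det := by
    rw [hfact]
    simp only [Matrix.det_mul]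
    rw [← hNdet2]
    ring
  -- trace A = Σ x ⬝ᵥ M⁻¹ *ᵥ x
  have hMinv : M⁻¹ = N⁻¹ * N⁻¹ := by rw [← hNN, Matrix.mul_inv_rev]
  have htr : A.trace = ∑ h, (x h) ⬝ᵥ (M⁻¹ *ᵥ x h) := by
    rw [hAdef, Matrix.trace_mul_cycle, ← hMinv, hSdef, Finset.mul_sum,
      Matrix.trace_sum]
    apply Finset.sum_congr rfl
    intro h _
    simp only [Matrix.trace, Matrix.diag, Matrix.mul_apply, vecMulVec_apply,
      dotProduct, mulVec, Finset.mul_sum]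
    apply Finset.sum_congr rfl; intro i _
    apply Finset.sum_congr rfl; intro j _
    ring
  have key : 1 + A.trace ≤ (1 + A).det := det_one_add_ge A hA
  rw [htr] at key
  rw [hdet, mul_comm, mul_div_assoc, div_self (ne_of_gt hMdet), mul_one]
  exact key
end

section
/- Let A be a d × d real symmetric positive definite matrix and let B be a d × d real symmetric positive semidefinite matrix. Then log(det(A + B)) - log(det(A)) ≤ d·log(1 + tr(A⁻¹B)/d). -/
open Matrix Finset

/-- Trace of a Hermitian real matrix equals the sum of its eigenvalues. -/
lemma my_trace_eq_sum_eigenvalues {d : ℕ} {M : Matrix (Fin d) (Fin d) ℝ}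
    (hM : M.IsHermitian) : M.trace = ∑ i, hM.eigenvalues i := by
  conv_lhs => rw [hM.spectral_theorem]
  rw [Unitary.conjStarAlgAut_apply, Matrix.trace_mul_cycle]
  have h1 : (star hM.eigenvectorUnitary : Matrix (Fin d) (Fin d) ℝ) *
      (hM.eigenvectorUnitary : Matrix (Fin d) (Fin d) ℝ) = 1 := by
    simpa using hM.eigenvectorUnitary.2.1
  rw [h1, Matrix.one_mul, Matrix.trace_diagonal]
  simp

/-- AM-GM in log form. -/
lemma my_amgm_log {d : ℕ} (hd : 0 < d) (μ : Fin d → ℝ) (hμ : ∀ i, 0 < μ i) :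
    Real.log (∏ i, μ i) ≤ (d : ℝ) * Real.log ((∑ i, μ i) / d) := by
  have hd' : (0 : ℝ) < d := by exact_mod_cast hd
  have hw : ∑ _i : Fin d, (1 / d : ℝ) = 1 := by
    simp [Finset.sum_const]
    field_simp
  have hgm := Real.geom_mean_le_arith_mean_weighted Finset.univ (fun _ => (1 / d : ℝ)) μ
    (fun i _ => by positivity) hw (fun i _ => (hμ i).le)
  have hprod : (0 : ℝ) < ∏ i, μ i ^ (1 / d : ℝ) := by
    exact Finset.prod_pos fun i _ => Real.rpow_pos_of_pos (hμ i) _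
  have hlog := Real.log_le_log hprod hgm
  rw [Real.log_prod (fun i _ => (Real.rpow_pos_of_pos (hμ i) _).ne')] at hlog
  simp only [Real.log_rpow (hμ _)] at hlog
  have hsum : ∑ _i : Fin d, (1 / d : ℝ) * μ _i = (∑ i, μ i) / d := by
    rw [← Finset.mul_sum]
    ring
  rw [hsum] at hlog
  calc Real.log (∏ i, μ i) = ∑ i, Real.log (μ i) :=
        Real.log_prod (fun i _ => (hμ i).ne')
    _ = (d : ℝ) * ∑ i, (1 / d : ℝ) * Real.log (μ i) := by
        rw [← Finset.mul_sum, ← mul_assoc]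
        field_simp
    _ ≤ (d : ℝ) * Real.log ((∑ i, μ i) / d) :=
        mul_le_mul_of_nonneg_left hlog hd'.le

open scoped MatrixOrder in
lemma my_sqrt_exists {d : ℕ} {A : Matrix (Fin d) (Fin d) ℝ} (hA : A.PosDef) :
    ∃ C : Matrix (Fin d) (Fin d) ℝ, C.PosSemidef ∧ C * C = A :=
  ⟨CFC.sqrt A, (CFC.sqrt_nonneg A).posSemidef, CFC.sqrt_mul_sqrt_self A hA.posSemidef.nonneg⟩

/-- For `A` symmetric positive definite and `B` symmetric positive semidefinite,
`log det(A+B) - log det A ≤ d·log(1 + tr(A⁻¹B)/d)`. -/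
theorem stmt7 {d : ℕ} (A B : Matrix (Fin d) (Fin d) ℝ)
    (hA : A.PosDef) (hB : B.PosSemidef) :
    Real.log (A + B).det - Real.log A.det ≤
      (d : ℝ) * Real.log (1 + (A⁻¹ * B).trace / d) := by
  rcases Nat.eq_zero_or_pos d with hd | hd
  · subst hd
    simp [Matrix.det_isEmpty]
  obtain ⟨C, hCpsd, hCC⟩ := my_sqrt_exists hA
  have hCH : Cᴴ = C := hCpsd.isHermitian
  have hdetA : (0 : ℝ) < A.det := hA.det_pos
  have hdetC : C.det ≠ 0 := by
    intro h
    rw [← hCC, Matrix.det_mul, h, mul_zero] at hdetA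
    exact lt_irrefl _ hdetA
  have hCinv : C * C⁻¹ = 1 := Matrix.mul_nonsing_inv _ hdetC.isUnit
  have hCinv' : C⁻¹ * C = 1 := Matrix.nonsing_inv_mul _ hdetC.isUnit
  have hCiH : (C⁻¹)ᴴ = C⁻¹ := by rw [Matrix.conjTranspose_nonsing_inv, hCH]
  set M := C⁻¹ * B * C⁻¹ with hMdef
  have hMpsd : M.PosSemidef := by
    have := hB.mul_mul_conjTranspose_same C⁻¹
    rwa [hCiH] at this
  set N := 1 + M with hNdef
  have hNpd : N.PosDef := Matrix.PosDef.add_posSemidef Matrix.PosDef.one hMpsd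
  -- A + B = C * N * C
  have hAB : A + B = C * N * C := by
    rw [hNdef, hMdef]
    rw [Matrix.mul_add, Matrix.mul_one, Matrix.add_mul, hCC]
    congr 1
    rw [← Matrix.mul_assoc, ← Matrix.mul_assoc, hCinv, Matrix.one_mul, Matrix.mul_assoc,
      hCinv', Matrix.mul_one]
  have hdetAB : (A + B).det = A.det * N.det := by
    rw [hAB, Matrix.det_mul, Matrix.det_mul, ← hCC, Matrix.det_mul]
    ring
  -- trace
  have htr : (A⁻¹ * B).trace = M.trace := by
    rw [← hCC, Matrix.mul_inv_rev, hMdef, Matrix.mul_assoc, Matrix.trace_mul_comm,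
      Matrix.mul_assoc]
  have htrN : N.trace = (d : ℝ) + M.trace := by
    rw [hNdef, Matrix.trace_add, Matrix.trace_one]
    simp
  -- eigenvalues of N
  have hdetN : N.det = ∏ i, hNpd.isHermitian.eigenvalues i := by
    simpa using hNpd.isHermitian.det_eq_prod_eigenvalues
  have htrN' : N.trace = ∑ i, hNpd.isHermitian.eigenvalues i :=
    my_trace_eq_sum_eigenvalues hNpd.isHermitian
  have hμpos : ∀ i, 0 < hNpd.isHermitian.eigenvalues i := hNpd.eigenvalues_pos
  have hd' : (0 : ℝ) < d := by exact_mod_cast hd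
  have hrhs : 1 + (A⁻¹ * B).trace / d = (∑ i, hNpd.isHermitian.eigenvalues i) / d := by
    rw [htr, ← htrN', htrN]
    field_simp
  have hlhs : Real.log (A + B).det - Real.log A.det =
      Real.log (∏ i, hNpd.isHermitian.eigenvalues i) := by
    rw [hdetAB, Real.log_mul hdetA.ne' hNpd.det_pos.ne', hdetN]
    ring
  rw [hlhs, hrhs]
  exact my_amgm_log hd _ hμpos
end

section
/- Let λ > 0, let G and N be d × d real symmetric positive semidefinite matrices, let Δ ≥ 0, and let u ∈ ℝ^d satisfy ‖u‖₂ ≤ Δ. Set M = λ·I + G + N (which is symmetric positive definite). Then √((Gu)ᵀ M⁻¹ (Gu)) ≤ Δ·λ_max(G) / √(λ + λ_min(G)), where λ_max and λ_min denote the largest and smallest eigenvalues of a symmetric matrix. -/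
open Matrix

lemma unitary_dot {d : ℕ} (U : Matrix (Fin d) (Fin d) ℝ)
    (hU : U ∈ Matrix.unitaryGroup (Fin d) ℝ) (a b : Fin d → ℝ) :
    (U *ᵥ a) ⬝ᵥ (U *ᵥ b) = a ⬝ᵥ b := by
  have h1 : star U * U = 1 := hU.1
  have ht : Uᵀ = star U := by
    ext i j; simp [Matrix.conjTranspose_apply]
  rw [dotProduct_mulVec, ← vecMul_transpose, vecMul_vecMul, ht, h1, vecMul_one]

lemma rayleigh {d : ℕ} {A : Matrix (Fin d) (Fin d) ℝ} (hA : A.PosSemidef) (x : Fin d → ℝ) :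
    (⨅ i, hA.1.eigenvalues i) * (x ⬝ᵥ x) ≤ x ⬝ᵥ (A *ᵥ x) ∧
    (A *ᵥ x) ⬝ᵥ (A *ᵥ x) ≤ (⨆ i, hA.1.eigenvalues i) ^ 2 * (x ⬝ᵥ x) := by
  set μ := hA.1.eigenvalues with hμdef
  set U : Matrix (Fin d) (Fin d) ℝ := (hA.1.eigenvectorUnitary : Matrix (Fin d) (Fin d) ℝ) with hUdef
  have hUmem : U ∈ Matrix.unitaryGroup (Fin d) ℝ := hA.1.eigenvectorUnitary.2
  have hofReal : (RCLike.ofReal ∘ μ : Fin d → ℝ) = μ := by ext i; simp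
  have hspec : A = U * diagonal μ * star U := by
    have := hA.1.spectral_theorem
    rwa [hofReal] at this
  set y : Fin d → ℝ := star U *ᵥ x with hydef
  have hx : U *ᵥ y = x := by
    rw [hydef, mulVec_mulVec, hUmem.2, one_mulVec]
  have hAx : A *ᵥ x = U *ᵥ (diagonal μ *ᵥ y) := by
    rw [hspec, ← mulVec_mulVec, ← mulVec_mulVec]
  have hxx : x ⬝ᵥ x = y ⬝ᵥ y := by
    rw [← hx, unitary_dot U hUmem]
  have hxAx : x ⬝ᵥ (A *ᵥ x) = ∑ i, y i * (μ i * y i) := by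
    rw [hAx, ← hx, unitary_dot U hUmem]
    simp [dotProduct, mulVec_diagonal]
  have hAxAx : (A *ᵥ x) ⬝ᵥ (A *ᵥ x) = ∑ i, (μ i * y i) * (μ i * y i) := by
    rw [hAx, unitary_dot U hUmem]
    simp [dotProduct, mulVec_diagonal]
  cases isEmpty_or_nonempty (Fin d) with
  | inl h =>
    constructor <;> simp [dotProduct, Finset.sum_of_isEmpty, hxAx, hAxAx]
  | inr h =>
    have hm : ∀ i, (⨅ j, μ j) ≤ μ i := fun i => ciInf_le (Finite.bddBelow_range _) i
    have hMx : ∀ i, μ i ≤ ⨆ j, μ j := fun i => le_ciSup (Finite.bddAbove_range _) i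
    have hμ0 : ∀ i, 0 ≤ μ i := fun i => hA.eigenvalues_nonneg i
    have hMx0 : 0 ≤ ⨆ j, μ j := (hμ0 (Classical.arbitrary _)).trans (hMx _)
    constructor
    · rw [hxAx, hxx, dotProduct, Finset.mul_sum]
      apply Finset.sum_le_sum
      intro i _
      nlinarith [hm i, mul_self_nonneg (y i)]
    · rw [hAxAx, hxx, dotProduct, Finset.mul_sum]
      apply Finset.sum_le_sum
      intro i _
      nlinarith [mul_le_mul (hMx i) (hMx i) (hμ0 i) hMx0, mul_self_nonneg (y i)]


/-- Offline bias bound: for `λ > 0`, `G, N` symmetric PSD, `‖u‖₂ ≤ Δ`, and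
`M = λI + G + N`, we have `√((Gu)ᵀ M⁻¹ (Gu)) ≤ Δ·λ_max(G)/√(λ + λ_min(G))`. -/
theorem stmt12 {d : ℕ} (lam : ℝ) (hlam : 0 < lam)
    (G N : Matrix (Fin d) (Fin d) ℝ) (hG : G.PosSemidef) (hN : N.PosSemidef)
    (Δ : ℝ) (hΔ : 0 ≤ Δ) (u : Fin d → ℝ)
    (hu : Real.sqrt (∑ i, u i ^ 2) ≤ Δ) :
    Real.sqrt ((G *ᵥ u) ⬝ᵥ ((lam • (1 : Matrix (Fin d) (Fin d) ℝ) + G + N)⁻¹ *ᵥ (G *ᵥ u))) ≤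
      Δ * (⨆ i, hG.1.eigenvalues i) / Real.sqrt (lam + ⨅ i, hG.1.eigenvalues i) := by
  set Mx := ⨆ i, hG.1.eigenvalues i with hMxdef
  set m := ⨅ i, hG.1.eigenvalues i with hmdef
  set Mm := lam • (1 : Matrix (Fin d) (Fin d) ℝ) + G + N with hMmdef
  have hμ0 : ∀ i, 0 ≤ hG.1.eigenvalues i := fun i => hG.eigenvalues_nonneg i
  have hMx0 : 0 ≤ Mx := by
    cases isEmpty_or_nonempty (Fin d) with
    | inl h => simp [hMxdef]
    | inr h => exact le_trans (hμ0 (Classical.arbitrary _)) (le_ciSup (Finite.bddAbove_range _) (Classical.arbitrary _))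
  have hm0 : 0 ≤ m := by
    cases isEmpty_or_nonempty (Fin d) with
    | inl h => simp [hmdef]
    | inr h => exact le_ciInf hμ0
  have hc : 0 < lam + m := by linarith
  -- quadratic form expansion
  have hexp : ∀ x : Fin d → ℝ, x ⬝ᵥ (Mm *ᵥ x)
      = lam * (x ⬝ᵥ x) + x ⬝ᵥ (G *ᵥ x) + x ⬝ᵥ (N *ᵥ x) := by
    intro x
    simp [hMmdef, add_mulVec, smul_mulVec, dotProduct_add, dotProduct_smul, smul_eq_mul]
  have hNx : ∀ x : Fin d → ℝ, 0 ≤ x ⬝ᵥ (N *ᵥ x) := by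
    intro x; simpa using hN.dotProduct_mulVec_nonneg x
  have hGx : ∀ x : Fin d → ℝ, 0 ≤ x ⬝ᵥ (G *ᵥ x) := by
    intro x; simpa using hG.dotProduct_mulVec_nonneg x
  have hquad : ∀ x : Fin d → ℝ, (lam + m) * (x ⬝ᵥ x) ≤ x ⬝ᵥ (Mm *ᵥ x) := by
    intro x
    have h1 := (rayleigh hG x).1
    have h2 := hNx x
    rw [hexp x]
    have : m * (x ⬝ᵥ x) ≤ x ⬝ᵥ (G *ᵥ x) := h1
    nlinarith [this]
  -- positive definiteness of Mm
  have hPD : Mm.PosDef := by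
    refine Matrix.PosDef.of_dotProduct_mulVec_pos ?_ (fun x hx => ?_)
    · have h1 : (lam • (1 : Matrix (Fin d) (Fin d) ℝ)).IsHermitian := by
        unfold Matrix.IsHermitian
        simp
      exact (h1.add hG.1).add hN.1
    · have hxx : 0 < x ⬝ᵥ x := by
        have hne : x ⬝ᵥ x ≠ 0 := fun h => hx (dotProduct_self_eq_zero.1 h)
        have hge : 0 ≤ x ⬝ᵥ x := Finset.sum_nonneg fun i _ => mul_self_nonneg _
        exact lt_of_le_of_ne hge (Ne.symm hne)
      have := hquad x
      have : 0 < x ⬝ᵥ (Mm *ᵥ x) := lt_of_lt_of_le (by positivity) this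
      simpa using this
  have hdet : IsUnit Mm.det := isUnit_iff_ne_zero.2 hPD.det_pos.ne'
  set v : Fin d → ℝ := G *ᵥ u with hvdef
  set w : Fin d → ℝ := Mm⁻¹ *ᵥ v with hwdef
  have hMw : Mm *ᵥ w = v := by
    rw [hwdef, mulVec_mulVec, mul_nonsing_inv _ hdet, one_mulVec]
  have hq2 : v ⬝ᵥ w = w ⬝ᵥ (Mm *ᵥ w) := by rw [hMw, dotProduct_comm]
  have hww : 0 ≤ w ⬝ᵥ w := Finset.sum_nonneg fun i _ => mul_self_nonneg _
  have hvv : 0 ≤ v ⬝ᵥ v := Finset.sum_nonneg fun i _ => mul_self_nonneg _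
  have hcq : (lam + m) * (w ⬝ᵥ w) ≤ v ⬝ᵥ w := hq2 ▸ hquad w
  have hq0 : 0 ≤ v ⬝ᵥ w := le_trans (mul_nonneg hc.le hww) hcq
  have hCS : (v ⬝ᵥ w) ^ 2 ≤ (v ⬝ᵥ v) * (w ⬝ᵥ w) := by
    have := Finset.sum_mul_sq_le_sq_mul_sq Finset.univ v w
    simpa [dotProduct, pow_two] using this
  -- ‖v‖² ≤ Mx² Δ²
  have huu : u ⬝ᵥ u ≤ Δ ^ 2 := by
    have hs : (0:ℝ) ≤ ∑ i, u i ^ 2 := Finset.sum_nonneg fun i _ => sq_nonneg _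
    have : (∑ i, u i ^ 2) = Real.sqrt (∑ i, u i ^ 2) ^ 2 := (Real.sq_sqrt hs).symm
    calc u ⬝ᵥ u = ∑ i, u i ^ 2 := by simp [dotProduct, pow_two]
      _ = Real.sqrt (∑ i, u i ^ 2) ^ 2 := this
      _ ≤ Δ ^ 2 := pow_le_pow_left₀ (Real.sqrt_nonneg _) hu 2
  have hvvb : v ⬝ᵥ v ≤ Mx ^ 2 * Δ ^ 2 := by
    have := (rayleigh hG u).2
    have h2 : Mx ^ 2 * (u ⬝ᵥ u) ≤ Mx ^ 2 * Δ ^ 2 :=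
      mul_le_mul_of_nonneg_left huu (sq_nonneg _)
    exact le_trans this h2
  -- q ≤ (Δ Mx)² / c
  have hqle : v ⬝ᵥ w ≤ (Δ * Mx) ^ 2 / (lam + m) := by
    rcases hq0.eq_or_lt with h | h
    · rw [← h]; positivity
    · rw [le_div_iff₀ hc]
      have key : (lam + m) * (v ⬝ᵥ w) ≤ v ⬝ᵥ v := by
        have h1 : (lam + m) * (v ⬝ᵥ w) ^ 2 ≤ (v ⬝ᵥ v) * ((lam + m) * (w ⬝ᵥ w)) := by
          nlinarith [hCS]
        have h2 : (v ⬝ᵥ v) * ((lam + m) * (w ⬝ᵥ w)) ≤ (v ⬝ᵥ v) * (v ⬝ᵥ w) :=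
          mul_le_mul_of_nonneg_left hcq hvv
        nlinarith [h1, h2, h]
      calc (v ⬝ᵥ w) * (lam + m) = (lam + m) * (v ⬝ᵥ w) := by ring
        _ ≤ v ⬝ᵥ v := key
        _ ≤ (Δ * Mx) ^ 2 := by nlinarith [hvvb]
  calc Real.sqrt (v ⬝ᵥ w) ≤ Real.sqrt ((Δ * Mx) ^ 2 / (lam + m)) := Real.sqrt_le_sqrt hqle
    _ = Real.sqrt ((Δ * Mx) ^ 2) / Real.sqrt (lam + m) := Real.sqrt_div (sq_nonneg _) _
    _ = Δ * Mx / Real.sqrt (lam + m) := by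
        rw [Real.sqrt_sq (mul_nonneg hΔ hMx0)]
end

section
/- Let S and A be finite nonempty sets, let H ≥ 1 be a natural number, let d be a positive natural number, and let Δ ≥ 0. Let φ : S × A × S → ℝ^d be a feature map satisfying Σ_{s' ∈ S} |φ_j(s' | s, a)| ≤ 1 for every (s, a) and every coordinate j. Let θ, θ' ∈ ℝ^d with ‖θ - θ'‖₂ ≤ Δ be such that P(s' | s, a) = ⟨θ, φ(s' | s, a)⟩ and P'(s' | s, a) = ⟨θ', φ(s' | s, a)⟩ are probability mass functions on S for every (s, a) (nonnegative and summing to one over s'). Let r : S × A → [0, 1] be a reward function and let π = (π₁, …, π_H) with π_h : S → A be a policy. Define value functions by V_{H+1}(s) = V'_{H+1}(s) = 0 and, for h = H down to 1, V_h(s) = r(s, π_h(s)) + Σ_{s'} P(s' | s, π_h(s))·V_{h+1}(s') and V'_h(s) = r(s, π_h(s)) + Σ_{s'} P'(s' | s, π_h(s))·V'_{h+1}(s'). Then for every state s, |V_1(s) - V'_1(s)| ≤ (H(H-1)/2)·Δ·√d. -/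
open Matrix

/-- Value-function discrepancy under environment shift in a linear mixture MDP:
if two transition kernels are linear in a shared bounded feature map with
parameters at Euclidean distance at most `Δ`, then for any policy the values at
stage 1 differ by at most `(H(H-1)/2)·Δ·√d`. -/
theorem stmt16 {S A : Type*} [Fintype S] [Nonempty S] [Fintype A] [Nonempty A]
    (H : ℕ) (hH : 1 ≤ H) {d : ℕ} (hd : 0 < d) (Δ : ℝ) (hΔ : 0 ≤ Δ)
    (φ : S → A → S → Fin d → ℝ)
    (hφ : ∀ s a j, ∑ s', |φ s a s' j| ≤ 1)
    (θ θ' : Fin d → ℝ)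
    (hθ : Real.sqrt (∑ j, (θ j - θ' j) ^ 2) ≤ Δ)
    (hP_nonneg : ∀ s a s', 0 ≤ θ ⬝ᵥ φ s a s')
    (hP_sum : ∀ s a, ∑ s', θ ⬝ᵥ φ s a s' = 1)
    (hP'_nonneg : ∀ s a s', 0 ≤ θ' ⬝ᵥ φ s a s')
    (hP'_sum : ∀ s a, ∑ s', θ' ⬝ᵥ φ s a s' = 1)
    (r : S → A → ℝ) (hr : ∀ s a, 0 ≤ r s a ∧ r s a ≤ 1)
    (π : ℕ → S → A)
    (V V' : ℕ → S → ℝ)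
    (hVH : ∀ s, V (H + 1) s = 0) (hV'H : ∀ s, V' (H + 1) s = 0)
    (hV : ∀ h, 1 ≤ h → h ≤ H → ∀ s,
      V h s = r s (π h s) + ∑ s', (θ ⬝ᵥ φ s (π h s) s') * V (h + 1) s')
    (hV' : ∀ h, 1 ≤ h → h ≤ H → ∀ s,
      V' h s = r s (π h s) + ∑ s', (θ' ⬝ᵥ φ s (π h s) s') * V' (h + 1) s') :
    ∀ s, |V 1 s - V' 1 s| ≤ (H : ℝ) * ((H : ℝ) - 1) / 2 * Δ * Real.sqrt d := by
  -- ℓ¹–ℓ² bound on the parameter difference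
  have habs : ∑ j, |θ j - θ' j| ≤ Real.sqrt d * Δ := by
    have hcs : (∑ j : Fin d, |θ j - θ' j|) ^ 2 ≤
        (Finset.univ : Finset (Fin d)).card * ∑ j, |θ j - θ' j| ^ 2 :=
      sq_sum_le_card_mul_sum_sq
    have h1 : (∑ j, |θ j - θ' j|) ^ 2 ≤ (d : ℝ) * ∑ j, (θ j - θ' j) ^ 2 := by
      simpa [sq_abs] using hcs
    have h2 : ∑ j, |θ j - θ' j| ≤ Real.sqrt ((d : ℝ) * ∑ j, (θ j - θ' j) ^ 2) := by
      exact Real.le_sqrt_of_sq_le h1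
    calc ∑ j, |θ j - θ' j| ≤ Real.sqrt ((d : ℝ) * ∑ j, (θ j - θ' j) ^ 2) := h2
      _ = Real.sqrt d * Real.sqrt (∑ j, (θ j - θ' j) ^ 2) := by
          rw [Real.sqrt_mul (by positivity)]
      _ ≤ Real.sqrt d * Δ := by
          exact mul_le_mul_of_nonneg_left hθ (Real.sqrt_nonneg _)
  -- per-(s,a): total variation type bound
  have hdiffsum : ∀ s a, ∑ s', |(θ - θ') ⬝ᵥ φ s a s'| ≤ Real.sqrt d * Δ := by
    intro s a
    have h1 : ∀ s', |(θ - θ') ⬝ᵥ φ s a s'| ≤ ∑ j, |θ j - θ' j| * |φ s a s' j| := by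
      intro s'
      calc |(θ - θ') ⬝ᵥ φ s a s'| ≤ ∑ j, |(θ j - θ' j) * φ s a s' j| := by
            simpa [dotProduct, Pi.sub_apply] using
              Finset.abs_sum_le_sum_abs (fun j => (θ j - θ' j) * φ s a s' j) Finset.univ
        _ = ∑ j, |θ j - θ' j| * |φ s a s' j| := by simp [abs_mul]
    calc ∑ s', |(θ - θ') ⬝ᵥ φ s a s'| ≤ ∑ s', ∑ j, |θ j - θ' j| * |φ s a s' j| :=
          Finset.sum_le_sum fun s' _ => h1 s'
      _ = ∑ j, |θ j - θ' j| * ∑ s', |φ s a s' j| := by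
          rw [Finset.sum_comm]; simp [Finset.mul_sum]
      _ ≤ ∑ j, |θ j - θ' j| * 1 :=
          Finset.sum_le_sum fun j _ =>
            mul_le_mul_of_nonneg_left (hφ s a j) (abs_nonneg _)
      _ ≤ Real.sqrt d * Δ := by simpa using habs
  -- boundedness of V'
  have hVbd : ∀ n, n ≤ H → ∀ s, 0 ≤ V' (H + 1 - n) s ∧ V' (H + 1 - n) s ≤ (n : ℝ) := by
    intro n
    induction n with
    | zero => intro _ s; simp [hV'H s]
    | succ n ih =>
      intro hn s
      have hih := ih (by omega)
      have hh1 : 1 ≤ H - n := by omega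
      have hhH : H - n ≤ H := by omega
      have hstep : H + 1 - (n + 1) = H - n := by omega
      have hnext : (H - n) + 1 = H + 1 - n := by omega
      rw [hstep, hV' (H - n) hh1 hhH s, hnext]
      set a := π (H - n) s
      constructor
      · have : (0:ℝ) ≤ ∑ s', (θ' ⬝ᵥ φ s a s') * V' (H + 1 - n) s' :=
          Finset.sum_nonneg fun s' _ =>
            mul_nonneg (hP'_nonneg s a s') (hih s').1
        linarith [(hr s a).1]
      · have h2 : ∑ s', (θ' ⬝ᵥ φ s a s') * V' (H + 1 - n) s' ≤
            ∑ s', (θ' ⬝ᵥ φ s a s') * (n : ℝ) :=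
          Finset.sum_le_sum fun s' _ =>
            mul_le_mul_of_nonneg_left (hih s').2 (hP'_nonneg s a s')
        have h3 : ∑ s', (θ' ⬝ᵥ φ s a s') * (n : ℝ) = (n : ℝ) := by
          rw [← Finset.sum_mul, hP'_sum s a, one_mul]
        push_cast
        linarith [(hr s a).2]
  -- main induction
  have main : ∀ n, n ≤ H → ∀ s, |V (H + 1 - n) s - V' (H + 1 - n) s| ≤
      (n : ℝ) * ((n : ℝ) - 1) / 2 * Δ * Real.sqrt d := by
    intro n
    induction n with
    | zero => intro _ s; simp [hVH s, hV'H s]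
    | succ n ih =>
      intro hn s
      have hih := ih (by omega)
      have hh1 : 1 ≤ H - n := by omega
      have hhH : H - n ≤ H := by omega
      have hstep : H + 1 - (n + 1) = H - n := by omega
      have hnext : (H - n) + 1 = H + 1 - n := by omega
      rw [hstep]
      set h := H - n with hdef
      set a := π h s
      have hEq : V h s - V' h s =
          (∑ s', (θ ⬝ᵥ φ s a s') * (V (h + 1) s' - V' (h + 1) s'))
          + ∑ s', ((θ - θ') ⬝ᵥ φ s a s') * V' (h + 1) s' := by
        rw [hV h hh1 hhH s, hV' h hh1 hhH s]
        rw [← Finset.sum_add_distrib]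
        have : ∀ s' : S, (θ ⬝ᵥ φ s a s') * (V (h + 1) s' - V' (h + 1) s')
            + ((θ - θ') ⬝ᵥ φ s a s') * V' (h + 1) s'
            = (θ ⬝ᵥ φ s a s') * V (h + 1) s' - (θ' ⬝ᵥ φ s a s') * V' (h + 1) s' := by
          intro s'
          rw [sub_dotProduct]
          ring
        rw [Finset.sum_congr rfl fun s' _ => this s', Finset.sum_sub_distrib]
        ring
      rw [hEq, hnext]
      have hb1 : |∑ s', (θ ⬝ᵥ φ s a s') * (V (H + 1 - n) s' - V' (H + 1 - n) s')| ≤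
          (n : ℝ) * ((n : ℝ) - 1) / 2 * Δ * Real.sqrt d := by
        calc |∑ s', (θ ⬝ᵥ φ s a s') * (V (H + 1 - n) s' - V' (H + 1 - n) s')|
            ≤ ∑ s', |(θ ⬝ᵥ φ s a s') * (V (H + 1 - n) s' - V' (H + 1 - n) s')| :=
              Finset.abs_sum_le_sum_abs _ _
          _ ≤ ∑ s', (θ ⬝ᵥ φ s a s') * ((n : ℝ) * ((n : ℝ) - 1) / 2 * Δ * Real.sqrt d) := by
              refine Finset.sum_le_sum fun s' _ => ?_
              rw [abs_mul, abs_of_nonneg (hP_nonneg s a s')]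
              exact mul_le_mul_of_nonneg_left (hih s') (hP_nonneg s a s')
          _ = (n : ℝ) * ((n : ℝ) - 1) / 2 * Δ * Real.sqrt d := by
              rw [← Finset.sum_mul, hP_sum s a, one_mul]
      have hb2 : |∑ s', ((θ - θ') ⬝ᵥ φ s a s') * V' (H + 1 - n) s'| ≤
          (n : ℝ) * (Real.sqrt d * Δ) := by
        calc |∑ s', ((θ - θ') ⬝ᵥ φ s a s') * V' (H + 1 - n) s'|
            ≤ ∑ s', |((θ - θ') ⬝ᵥ φ s a s') * V' (H + 1 - n) s'| :=
              Finset.abs_sum_le_sum_abs _ _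
          _ ≤ ∑ s', |(θ - θ') ⬝ᵥ φ s a s'| * (n : ℝ) := by
              refine Finset.sum_le_sum fun s' _ => ?_
              rw [abs_mul]
              refine mul_le_mul_of_nonneg_left ?_ (abs_nonneg _)
              rw [abs_of_nonneg (hVbd n (by omega) s').1]
              exact (hVbd n (by omega) s').2
          _ = (∑ s', |(θ - θ') ⬝ᵥ φ s a s'|) * (n : ℝ) := by rw [Finset.sum_mul]
          _ ≤ (Real.sqrt d * Δ) * (n : ℝ) :=
              mul_le_mul_of_nonneg_right (hdiffsum s a) (Nat.cast_nonneg n)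
          _ = (n : ℝ) * (Real.sqrt d * Δ) := by ring
      calc |(∑ s', (θ ⬝ᵥ φ s a s') * (V (H + 1 - n) s' - V' (H + 1 - n) s'))
          + ∑ s', ((θ - θ') ⬝ᵥ φ s a s') * V' (H + 1 - n) s'|
          ≤ |∑ s', (θ ⬝ᵥ φ s a s') * (V (H + 1 - n) s' - V' (H + 1 - n) s')|
            + |∑ s', ((θ - θ') ⬝ᵥ φ s a s') * V' (H + 1 - n) s'| := abs_add_le _ _
        _ ≤ (n : ℝ) * ((n : ℝ) - 1) / 2 * Δ * Real.sqrt d + (n : ℝ) * (Real.sqrt d * Δ) :=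
            add_le_add hb1 hb2
        _ = ((n : ℕ) + 1 : ℝ) * (((n : ℕ) + 1 : ℝ) - 1) / 2 * Δ * Real.sqrt d := by ring
        _ = ((n + 1 : ℕ) : ℝ) * (((n + 1 : ℕ) : ℝ) - 1) / 2 * Δ * Real.sqrt d := by
            push_cast; ring
  intro s
  have := main H le_rfl s
  simpa [Nat.add_sub_cancel_left, show H + 1 - H = 1 by omega] using this
end

section
/- Let S and A be finite nonempty sets, let H ≥ 1 be a natural number, let d be a positive natural number, let r : S × A → ℝ be a reward function, and let φ : S × A × S → ℝ^d be a feature map. Let θ* ∈ ℝ^d be such that P(s' | s, a) = ⟨θ*, φ(s' | s, a)⟩ is a probability mass function on S for every (s, a). Let C ⊆ ℝ^d be a nonempty compact set with θ* ∈ C. Define the optimistic recursion by Q̂_{H+1}(s, a) = 0 and, for h = H down to 1, V̂_{h+1}(s) = max_{a ∈ A} Q̂_{h+1}(s, a) and Q̂_h(s, a) = r(s, a) + max_{θ ∈ C} Σ_{j=1}^d θ_j · Σ_{s'} φ_j(s' | s, a)·V̂_{h+1}(s'). Define the optimal value recursion by Q*_{H+1}(s, a) = 0, V*_{h+1}(s)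 = max_{a ∈ A} Q*_{h+1}(s, a), and Q*_h(s, a) = r(s, a) + Σ_{s'} P(s' | s, a)·V*_{h+1}(s'). Then for every h ∈ {1, …, H+1}, every state s and action a, Q*_h(s, a) ≤ Q̂_h(s, a) and V*_h(s) ≤ V̂_h(s). -/
open Matrix

/-- Optimism of optimistic planning over a confidence set in a linear mixture
MDP: if the true parameter `θ*` belongs to the nonempty compact confidence set
`C`, then the optimistic backward recursion dominates the optimal one. -/
theorem stmt17 {S A : Type*} [Fintype S] [Nonempty S] [Fintype A] [Nonempty A]
    (H : ℕ) (hH : 1 ≤ H) {d : ℕ} (hd : 0 < d)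
    (r : S → A → ℝ)
    (φ : S → A → S → Fin d → ℝ)
    (θstar : Fin d → ℝ)
    (hP_nonneg : ∀ s a s', 0 ≤ θstar ⬝ᵥ φ s a s')
    (hP_sum : ∀ s a, ∑ s', θstar ⬝ᵥ φ s a s' = 1)
    (C : Set (Fin d → ℝ)) (hC_ne : C.Nonempty) (hC_cpt : IsCompact C)
    (hθC : θstar ∈ C)
    (Qhat : ℕ → S → A → ℝ) (Vhat : ℕ → S → ℝ)
    (Qstar : ℕ → S → A → ℝ) (Vstar : ℕ → S → ℝ)
    (hQhatH : ∀ s a, Qhat (H + 1) s a = 0)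
    (hVhat : ∀ h, 1 ≤ h → h ≤ H + 1 → ∀ s, Vhat h s = ⨆ a, Qhat h s a)
    (hQhat : ∀ h, 1 ≤ h → h ≤ H → ∀ s a,
      Qhat h s a = r s a +
        ⨆ θ : C, ∑ j, (θ : Fin d → ℝ) j * ∑ s', φ s a s' j * Vhat (h + 1) s')
    (hQstarH : ∀ s a, Qstar (H + 1) s a = 0)
    (hVstar : ∀ h, 1 ≤ h → h ≤ H + 1 → ∀ s, Vstar h s = ⨆ a, Qstar h s a)
    (hQstar : ∀ h, 1 ≤ h → h ≤ H → ∀ s a,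
      Qstar h s a = r s a + ∑ s', (θstar ⬝ᵥ φ s a s') * Vstar (h + 1) s') :
    ∀ h, 1 ≤ h → h ≤ H + 1 → ∀ s a,
      Qstar h s a ≤ Qhat h s a ∧ Vstar h s ≤ Vhat h s := by

  suffices key : ∀ k h, 1 ≤ h → h + k = H + 1 → ∀ s a,
      Qstar h s a ≤ Qhat h s a ∧ Vstar h s ≤ Vhat h s by
    intro h h1 h2 s a
    exact key (H + 1 - h) h h1 (by omega) s a
  intro k
  induction k with
  | zero =>
    intro h h1 h2 s a
    have hh : h = H + 1 := by omega
    subst hh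
    refine ⟨by rw [hQstarH, hQhatH], ?_⟩
    rw [hVstar _ h1 le_rfl, hVhat _ h1 le_rfl]
    apply ciSup_mono (Set.Finite.bddAbove (Set.finite_range _))
    intro a'
    rw [hQstarH, hQhatH]
  | succ k ih =>
    intro h h1 h2 s a
    have hhH : h ≤ H := by omega
    have hV : ∀ s', Vstar (h + 1) s' ≤ Vhat (h + 1) s' :=
      fun s' => (ih (h + 1) (by omega) (by omega) s' (Classical.arbitrary A)).2
    have hQ : ∀ s a, Qstar h s a ≤ Qhat h s a := by
      intro s a
      rw [hQstar h h1 hhH, hQhat h h1 hhH]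
      apply add_le_add le_rfl
      have hbdd : BddAbove (Set.range fun θ : C =>
          ∑ j, (θ : Fin d → ℝ) j * ∑ s', φ s a s' j * Vhat (h + 1) s') := by
        have hcont : Continuous (fun θ : Fin d → ℝ =>
            ∑ j, θ j * ∑ s', φ s a s' j * Vhat (h + 1) s') := by
          continuity
        have him := (hC_cpt.image hcont).bddAbove
        rwa [Set.image_eq_range] at him
      calc ∑ s', (θstar ⬝ᵥ φ s a s') * Vstar (h + 1) s'
          ≤ ∑ s', (θstar ⬝ᵥ φ s a s') * Vhat (h + 1) s' := by
            apply Finset.sum_le_sum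
            intro s' _
            exact mul_le_mul_of_nonneg_left (hV s') (hP_nonneg s a s')
        _ = ∑ j, θstar j * ∑ s', φ s a s' j * Vhat (h + 1) s' := by
            simp only [dotProduct, Finset.sum_mul, Finset.mul_sum]
            rw [Finset.sum_comm]
            apply Finset.sum_congr rfl
            intro s' _
            apply Finset.sum_congr rfl
            intro j _
            ring
        _ ≤ ⨆ θ : C, ∑ j, (θ : Fin d → ℝ) j * ∑ s', φ s a s' j * Vhat (h + 1) s' :=
            le_ciSup hbdd ⟨θstar, hθC⟩
    refine ⟨hQ s a, ?_⟩
    rw [hVstar h h1 (by omega), hVhat h h1 (by omega)]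
    exact ciSup_mono (Set.Finite.bddAbove (Set.finite_range _)) fun a' => hQ s a'
end

section
/- Let B, H, d, K, M, τ, Δ, ε be real numbers with B > 0, H > 0, d > 0, K ≥ 1, M > 0, τ > 0, Δ ≥ 0 and 0 < ε ≤ 1/2. Suppose τ·M ≥ H³·K^{1+2ε} and Δ·H^{7/2}·d^{1/2}·K^{1/2+ε} ≤ B·τ. Then ( B·H²·d·√K + H⁴·d^{3/2}·Δ·√K·√(M/τ) ) · √( log(1 + H³·K/(τ·M)) ) ≤ 2·B·H²·d·K^{1/2-ε}. -/
/-- Algebraic core of the informativeness corollary: under the coverage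
condition `τM ≥ H³K^{1+2ε}` and the shift condition
`Δ·H^{7/2}·d^{1/2}·K^{1/2+ε} ≤ B·τ`, the offline–online regret term is at most
`2·B·H²·d·K^{1/2-ε}`. -/
theorem stmt19 (B H d K M τ Δ ε : ℝ)
    (hB : 0 < B) (hH : 0 < H) (hd : 0 < d) (hK : 1 ≤ K) (hM : 0 < M)
    (hτ : 0 < τ) (hΔ : 0 ≤ Δ) (hε0 : 0 < ε) (hε : ε ≤ 1 / 2)
    (hcov : H ^ 3 * K ^ (1 + 2 * ε) ≤ τ * M)
    (hshift : Δ * H ^ ((7 : ℝ) / 2) * d ^ ((1 : ℝ) / 2) * K ^ (1 / 2 + ε) ≤ B * τ) :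
    (B * H ^ 2 * d * Real.sqrt K +
        H ^ 4 * d ^ ((3 : ℝ) / 2) * Δ * Real.sqrt K * Real.sqrt (M / τ)) *
      Real.sqrt (Real.log (1 + H ^ 3 * K / (τ * M))) ≤
      2 * B * H ^ 2 * d * K ^ (1 / 2 - ε) := by
  have hK0 : (0:ℝ) < K := lt_of_lt_of_le one_pos hK
  have hτM : (0:ℝ) < τ * M := mul_pos hτ hM
  set x : ℝ := H ^ 3 * K / (τ * M) with hxdef
  have hx0 : 0 ≤ x := by positivity
  have hL : Real.log (1 + x) ≤ x := by
    have h := Real.log_le_sub_one_of_pos (show (0:ℝ) < 1 + x by linarith)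
    linarith
  have hLnn : 0 ≤ Real.log (1 + x) := Real.log_nonneg (by linarith)
  have hKpow : (0:ℝ) < K ^ (1 + 2 * ε) := Real.rpow_pos_of_pos hK0 _
  have hH3K : (0:ℝ) < H ^ 3 * K := by positivity
  have hH3Kpow : (0:ℝ) < H ^ 3 * K ^ (1 + 2 * ε) := by positivity
  -- x ≤ K^(-2ε)
  have hx_le : x ≤ K ^ (-(2 * ε)) := by
    have h1 : x ≤ H ^ 3 * K / (H ^ 3 * K ^ (1 + 2 * ε)) :=
      div_le_div_of_nonneg_left hH3K.le hH3Kpow hcov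
    have h2 : H ^ 3 * K / (H ^ 3 * K ^ (1 + 2 * ε)) = K ^ (-(2 * ε)) := by
      rw [mul_div_mul_left _ _ (by positivity : (H:ℝ) ^ 3 ≠ 0)]
      rw [eq_comm, eq_div_iff (ne_of_gt hKpow), ← Real.rpow_add hK0]
      rw [show -(2 * ε) + (1 + 2 * ε) = 1 by ring, Real.rpow_one]
    linarith
  have hsL : Real.sqrt (Real.log (1 + x)) ≤ K ^ (-ε) := by
    have h := Real.sqrt_le_sqrt (hL.trans hx_le)
    have h2 : Real.sqrt (K ^ (-(2 * ε))) = K ^ (-ε) := by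
      rw [show -(2 * ε) = (-ε) * 2 by ring, Real.rpow_mul hK0.le,
        Real.rpow_two, Real.sqrt_sq (Real.rpow_nonneg hK0.le _)]
    linarith
  have hsLnn : 0 ≤ Real.sqrt (Real.log (1 + x)) := Real.sqrt_nonneg _
  -- Term 1
  have hT1 : B * H ^ 2 * d * Real.sqrt K * Real.sqrt (Real.log (1 + x)) ≤
      B * H ^ 2 * d * K ^ (1 / 2 - ε) := by
    have h1 : Real.sqrt K * Real.sqrt (Real.log (1 + x)) ≤ K ^ (1 / 2 - ε) := by
      calc Real.sqrt K * Real.sqrt (Real.log (1 + x))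
          ≤ Real.sqrt K * K ^ (-ε) :=
            mul_le_mul_of_nonneg_left hsL (Real.sqrt_nonneg _)
        _ = K ^ ((1:ℝ)/2) * K ^ (-ε) := by rw [Real.sqrt_eq_rpow]
        _ = K ^ (1 / 2 - ε) := by
            rw [← Real.rpow_add hK0]; ring_nf
    calc B * H ^ 2 * d * Real.sqrt K * Real.sqrt (Real.log (1 + x))
        = B * H ^ 2 * d * (Real.sqrt K * Real.sqrt (Real.log (1 + x))) := by ring
      _ ≤ B * H ^ 2 * d * K ^ (1 / 2 - ε) :=
          mul_le_mul_of_nonneg_left h1 (by positivity)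
  -- Term 2
  have hT2 : H ^ 4 * d ^ ((3:ℝ)/2) * Δ * Real.sqrt K * Real.sqrt (M / τ) *
      Real.sqrt (Real.log (1 + x)) ≤ B * H ^ 2 * d * K ^ (1 / 2 - ε) := by
    have hRnn : 0 ≤ B * H ^ 2 * d * K ^ (1 / 2 - ε) := by positivity
    apply le_of_pow_le_pow_left₀ two_ne_zero hRnn
    have hd32 : (d ^ ((3:ℝ)/2)) ^ 2 = d ^ 3 := by
      rw [← Real.rpow_natCast (d ^ ((3:ℝ)/2)) 2, ← Real.rpow_mul hd.le,
        ← Real.rpow_natCast d 3]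
      norm_num
    have hH72 : (H ^ ((7:ℝ)/2)) ^ 2 = H ^ 7 := by
      rw [← Real.rpow_natCast (H ^ ((7:ℝ)/2)) 2, ← Real.rpow_mul hH.le,
        ← Real.rpow_natCast H 7]
      norm_num
    have hd12 : (d ^ ((1:ℝ)/2)) ^ 2 = d := by
      rw [← Real.rpow_natCast (d ^ ((1:ℝ)/2)) 2, ← Real.rpow_mul hd.le]
      norm_num
    have hK12 : (K ^ (1/2 + ε)) ^ 2 = K ^ (1 + 2*ε) := by
      rw [← Real.rpow_natCast (K ^ (1/2 + ε)) 2, ← Real.rpow_mul hK0.le]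
      norm_num
      congr 1; ring
    have hKm : (K ^ (1/2 - ε)) ^ 2 = K ^ (1 - 2*ε) := by
      rw [← Real.rpow_natCast (K ^ (1/2 - ε)) 2, ← Real.rpow_mul hK0.le]
      congr 1; push_cast; ring
    -- squared shift condition
    have hshift2 : Δ ^ 2 * H ^ 7 * d * K ^ (1 + 2*ε) ≤ B ^ 2 * τ ^ 2 := by
      have h := mul_le_mul hshift hshift (by positivity) (by positivity)
      have e1 : (Δ * H ^ ((7:ℝ)/2) * d ^ ((1:ℝ)/2) * K ^ (1/2 + ε)) *
          (Δ * H ^ ((7:ℝ)/2) * d ^ ((1:ℝ)/2) * K ^ (1/2 + ε)) =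
          Δ ^ 2 * (H ^ ((7:ℝ)/2)) ^ 2 * (d ^ ((1:ℝ)/2)) ^ 2 * (K ^ (1/2 + ε)) ^ 2 := by ring
      rw [e1, hH72, hd12, hK12] at h
      nlinarith [h]
    -- key inequality after multiplying by H^4 d^2 K^(1-2ε)
    have hKK : K ^ ((1:ℝ) + 2*ε) * K ^ (1 - 2*ε) = K ^ 2 := by
      rw [← Real.rpow_add hK0, ← Real.rpow_natCast K 2]
      norm_num
    have hkey : Δ ^ 2 * H ^ 11 * d ^ 3 * K ^ 2 ≤
        B ^ 2 * τ ^ 2 * (H ^ 4 * d ^ 2 * K ^ (1 - 2*ε)) := by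
      have h3 := mul_le_mul_of_nonneg_right hshift2
        (show (0:ℝ) ≤ H ^ 4 * d ^ 2 * K ^ (1 - 2*ε) by positivity)
      calc Δ ^ 2 * H ^ 11 * d ^ 3 * K ^ 2
          = Δ ^ 2 * H ^ 7 * d * K ^ (1 + 2*ε) * (H ^ 4 * d ^ 2 * K ^ (1 - 2*ε)) := by
            rw [show Δ ^ 2 * H ^ 7 * d * K ^ (1 + 2*ε) * (H ^ 4 * d ^ 2 * K ^ (1 - 2*ε)) =
              Δ ^ 2 * H ^ 11 * d ^ 3 * (K ^ ((1:ℝ) + 2*ε) * K ^ (1 - 2*ε)) from by ring, hKK]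
        _ ≤ B ^ 2 * τ ^ 2 * (H ^ 4 * d ^ 2 * K ^ (1 - 2*ε)) := h3
    -- expand the square of the LHS
    have hsq : (H ^ 4 * d ^ ((3:ℝ)/2) * Δ * Real.sqrt K * Real.sqrt (M / τ) *
        Real.sqrt (Real.log (1 + x))) ^ 2 =
        H ^ 8 * d ^ 3 * Δ ^ 2 * (K * (M / τ) * Real.log (1 + x)) := by
      have s1 : (Real.sqrt K) ^ 2 = K := Real.sq_sqrt hK0.le
      have s2 : (Real.sqrt (M / τ)) ^ 2 = M / τ := Real.sq_sqrt (by positivity)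
      have s3 : (Real.sqrt (Real.log (1 + x))) ^ 2 = Real.log (1 + x) := Real.sq_sqrt hLnn
      calc (H ^ 4 * d ^ ((3:ℝ)/2) * Δ * Real.sqrt K * Real.sqrt (M / τ) *
          Real.sqrt (Real.log (1 + x))) ^ 2
          = H ^ 8 * (d ^ ((3:ℝ)/2)) ^ 2 * Δ ^ 2 * ((Real.sqrt K) ^ 2 *
            (Real.sqrt (M / τ)) ^ 2 * (Real.sqrt (Real.log (1 + x))) ^ 2) := by ring
        _ = H ^ 8 * d ^ 3 * Δ ^ 2 * (K * (M / τ) * Real.log (1 + x)) := by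
            rw [s1, s2, s3, hd32]
    rw [hsq]
    have hMx : M / τ * x = H ^ 3 * K / τ ^ 2 := by
      rw [hxdef]; field_simp
    have hb1 : K * (M / τ) * Real.log (1 + x) ≤ K * (M / τ) * x :=
      mul_le_mul_of_nonneg_left hL (by positivity)
    have hb2 : K * (M / τ) * x = H ^ 3 * K ^ 2 / τ ^ 2 := by
      rw [show K * (M / τ) * x = K * (M / τ * x) from by ring, hMx]; ring
    have hstep : H ^ 8 * d ^ 3 * Δ ^ 2 * (K * (M / τ) * Real.log (1 + x)) ≤
        Δ ^ 2 * H ^ 11 * d ^ 3 * K ^ 2 / τ ^ 2 := by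
      have := mul_le_mul_of_nonneg_left hb1 (show (0:ℝ) ≤ H ^ 8 * d ^ 3 * Δ ^ 2 by positivity)
      rw [hb2] at this
      calc H ^ 8 * d ^ 3 * Δ ^ 2 * (K * (M / τ) * Real.log (1 + x))
          ≤ H ^ 8 * d ^ 3 * Δ ^ 2 * (H ^ 3 * K ^ 2 / τ ^ 2) := this
        _ = Δ ^ 2 * H ^ 11 * d ^ 3 * K ^ 2 / τ ^ 2 := by ring
    have hfin : Δ ^ 2 * H ^ 11 * d ^ 3 * K ^ 2 / τ ^ 2 ≤
        (B * H ^ 2 * d * K ^ (1 / 2 - ε)) ^ 2 := by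
      rw [div_le_iff₀ (by positivity : (0:ℝ) < τ ^ 2)]
      have e2 : (B * H ^ 2 * d * K ^ (1 / 2 - ε)) ^ 2 * τ ^ 2 =
          B ^ 2 * τ ^ 2 * (H ^ 4 * d ^ 2 * (K ^ (1/2 - ε)) ^ 2) := by ring
      rw [e2, hKm]
      exact hkey
    linarith
  calc (B * H ^ 2 * d * Real.sqrt K +
        H ^ 4 * d ^ ((3:ℝ)/2) * Δ * Real.sqrt K * Real.sqrt (M / τ)) *
      Real.sqrt (Real.log (1 + x))
      = B * H ^ 2 * d * Real.sqrt K * Real.sqrt (Real.log (1 + x)) +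
        H ^ 4 * d ^ ((3:ℝ)/2) * Δ * Real.sqrt K * Real.sqrt (M / τ) *
          Real.sqrt (Real.log (1 + x)) := by ring
    _ ≤ 2 * B * H ^ 2 * d * K ^ (1 / 2 - ε) := by linarith
end
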